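/- Let (W(t))_{t≥0} be a standard one-dimensional Brownian motion, let σ > 0 and Θ > 0, and let S be an exponential random variable with rate λ > 0 independent of W. Then there exist constants c₀ > 0, c₁ > 0, and C₀ > 0 such that for all C ≥ C₀, P( (1 + Θ S) · sup_{t∈[0,S]} |W(t)| ≥ C/(4σ) ) ≤ c₀ (1 + √C) e^{−c₁ √C}. -/

import Mathlib

/-!
On the event `S ≤ R := √C` the amplified supremum is at most `(1 + Θ R) sup_{[0,R]} |W|`, so
it suffices to combine `P(S > R) = e^{-λR}` with a maximal inequality for `W` on `[0, R]`.
The latter comes from chaining along the dyadic grids of mesh `R / 2^m`: if every increment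
at level `m` is below `(a/4)(3/4)^m`, continuity gives `sup_{[0,R]} |W| ≤ a`. Each increment is
Gaussian with variance at most `R / 2^m`, so by the Chernoff bound level `m` fails with
probability about `2^m exp(-(a²/32R)(9/8)^m)`, and these sum to `O(exp(-a²/32R))`. Taking `a`
proportional to `R` makes both terms decay like `e^{-c√C}`.
-/

open MeasureTheory

/-- A standard one-dimensional Brownian motion on `[0, ∞)`: a measurable process with
continuous paths, starting at `0`, which is a centered Gaussian process with covariance
`E[W(s)W(t)] = min(s,t)` (every finite linear combination `∑ cᵢ W(tᵢ)` is a centered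
Gaussian with the corresponding variance). -/
def IsStandardBrownianMotion {Ω : Type*} [MeasurableSpace Ω] (ℙ : Measure Ω)
    (W : ℝ → Ω → ℝ) : Prop :=
  (∀ t, Measurable (W t)) ∧
  (∀ ω, ContinuousOn (fun t => W t ω) (Set.Ici 0)) ∧
  (∀ ω, W 0 ω = 0) ∧
  ∀ (n : ℕ) (c : Fin n → ℝ) (t : Fin n → ℝ), (∀ i, 0 ≤ t i) →
    Measure.map (fun ω => ∑ i, c i * W (t i) ω) ℙ =
      ProbabilityTheory.gaussianReal 0
        (Real.toNNReal (∑ i, ∑ j, c i * c j * min (t i) (t j)))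

section

open ProbabilityTheory Real Filter Topology Set
open scoped NNReal

lemma ProbabilityTheory.expMeasure_Ioi {r s : ℝ} (hr : 0 < r) (hs : 0 ≤ s) :
    expMeasure r (Ioi s) = ENNReal.ofReal (exp (-(r * s))) := by
  have := isProbabilityMeasure_expMeasure hr
  rw [← compl_Iic, prob_compl_eq_one_sub measurableSet_Iic, ← ofReal_cdf,
    cdf_expMeasure_eq hr, if_pos hs, ← ENNReal.ofReal_one,
    ← ENNReal.ofReal_sub _ (sub_nonneg.2 (exp_le_one_iff.2 (by nlinarith))), sub_sub_cancel]

namespace ProbabilityTheory.HasSubgaussianMGF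

variable {Ω : Type*} [MeasurableSpace Ω] {μ : Measure Ω} {X : Ω → ℝ} {c d : ℝ≥0}

lemma mono (h : HasSubgaussianMGF X c μ) (hcd : c ≤ d) : HasSubgaussianMGF X d μ :=
  ⟨h.integrable_exp_mul, fun t => (h.mgf_le t).trans (exp_le_exp.2 (by gcongr))⟩

lemma measure_abs_ge_le [IsFiniteMeasure μ] (h : HasSubgaussianMGF X c μ) {ε : ℝ}
    (hε : 0 ≤ ε) : μ {ω | ε ≤ |X ω|} ≤ ENNReal.ofReal (2 * exp (-ε ^ 2 / (2 * c))) :=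
  calc μ {ω | ε ≤ |X ω|} ≤ μ ({ω | ε ≤ X ω} ∪ {ω | ε ≤ (-X) ω}) :=
        measure_mono fun ω (hω : ε ≤ |X ω|) => le_abs.1 hω
    _ ≤ μ {ω | ε ≤ X ω} + μ {ω | ε ≤ (-X) ω} := measure_union_le _ _
    _ ≤ ENNReal.ofReal (exp (-ε ^ 2 / (2 * c))) + ENNReal.ofReal (exp (-ε ^ 2 / (2 * c))) := by
        rw [← ofReal_measureReal, ← ofReal_measureReal]
        exact add_le_add (ENNReal.ofReal_le_ofReal (h.measure_ge_le hε))
          (ENNReal.ofReal_le_ofReal (h.neg.measure_ge_le hε))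
    _ = ENNReal.ofReal (2 * exp (-ε ^ 2 / (2 * c))) := by
        rw [← ENNReal.ofReal_add (exp_pos _).le (exp_pos _).le, ← two_mul]

end ProbabilityTheory.HasSubgaussianMGF

lemma ProbabilityTheory.hasSubgaussianMGF_of_map_eq_gaussianReal {Ω : Type*}
    [MeasurableSpace Ω] {μ : Measure Ω} {X : Ω → ℝ} {v : ℝ≥0} (hX : AEMeasurable X μ)
    (h : μ.map X = gaussianReal 0 v) : HasSubgaussianMGF X v μ := by
  refine (HasSubgaussianMGF.id_map_iff hX).1 ?_
  rw [h]
  exact ⟨integrable_exp_mul_gaussianReal, fun t => by simp [mgf_id_gaussianReal]⟩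

/-- `2 * (k / 2)` is `k` rounded down to an even index, i.e. the parent of `k` in the grid of
level `m - 1`; for even `k` the increment vanishes. -/
noncomputable def dyadicIncrement (f : ℝ → ℝ) (s : ℝ) (m k : ℕ) : ℝ :=
  f (k / 2 ^ m * s) - f ((2 * (k / 2) : ℕ) / 2 ^ m * s)

section Chaining

variable {f : ℝ → ℝ} {s B : ℝ} {b : ℕ → ℝ}

lemma abs_apply_dyadic_le_sum (hf0 : f 0 = 0)
    (hb : ∀ m k : ℕ, k ≤ 2 ^ m → |dyadicIncrement f s m k| ≤ b m) (n j : ℕ)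
    (hj : j ≤ 2 ^ n) :
    |f (j / 2 ^ n * s)| ≤ ∑ m ∈ Finset.range (n + 1), b m := by
  induction n generalizing j with
  | zero =>
    interval_cases j
    · simpa [dyadicIncrement, hf0] using hb 0 0 zero_le_one
    · simpa [dyadicIncrement, hf0] using hb 0 1 le_rfl
  | succ n ih =>
    have hparent : ((2 * (j / 2) : ℕ) : ℝ) / 2 ^ (n + 1) * s = (j / 2 : ℕ) / 2 ^ n * s := by
      push_cast; ring
    have hstep := hb (n + 1) j hj
    rw [dyadicIncrement, hparent] at hstep
    rw [Finset.sum_range_succ]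
    linarith [ih (j / 2) (by omega),
      abs_sub_abs_le_abs_sub (f (j / 2 ^ (n + 1) * s)) (f ((j / 2 : ℕ) / 2 ^ n * s))]

lemma abs_le_of_dyadicIncrement_le (hf0 : f 0 = 0) (hf : ContinuousOn f (Icc 0 s))
    (hs : 0 < s) (hB : ∀ n, ∑ m ∈ Finset.range (n + 1), b m ≤ B)
    (hb : ∀ m k : ℕ, k ≤ 2 ^ m → |dyadicIncrement f s m k| ≤ b m) {t : ℝ}
    (ht : t ∈ Icc 0 s) :
    |f t| ≤ B := by
  set x := t / s
  have hx0 : 0 ≤ x := div_nonneg ht.1 hs.le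
  have hx1 : x ≤ 1 := (div_le_one hs).2 ht.2
  set j : ℕ → ℕ := fun n => ⌊x * 2 ^ n⌋₊
  have hj : ∀ n, j n ≤ 2 ^ n := fun n =>
    Nat.floor_le_of_le (by push_cast; nlinarith [pow_pos (two_pos : (0 : ℝ) < 2) n])
  have hlim : Tendsto (fun n : ℕ => (j n : ℝ) / 2 ^ n * s) atTop (𝓝 t) := by
    have := ((tendsto_nat_floor_mul_div_atTop hx0).comp
      (tendsto_pow_atTop_atTop_of_one_lt one_lt_two)).mul_const s
    rwa [div_mul_cancel₀ t hs.ne'] at this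
  have hmem : ∀ n, (j n : ℝ) / 2 ^ n * s ∈ Icc 0 s := fun n =>
    ⟨by positivity, mul_le_of_le_one_left hs.le
      ((div_le_one (by positivity)).2 (by exact_mod_cast hj n))⟩
  have hflim := ((hf t ht).tendsto.comp
    (tendsto_nhdsWithin_iff.2 ⟨hlim, Eventually.of_forall hmem⟩)).abs
  exact le_of_tendsto hflim (Eventually.of_forall fun n =>
    (abs_apply_dyadic_le_sum hf0 hb n (j n) (hj n)).trans (hB n))

end Chaining

lemma two_pow_add_one_mul_exp_neg_le {x : ℝ} (hx : 8 * log 4 ≤ x) (m : ℕ) :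
    (2 ^ m + 1) * (2 * exp (-(x * (9 / 8) ^ m))) ≤ 4 * exp (-x) * (1 / 2) ^ m := by
  have hx0 : 0 ≤ x := le_trans (by positivity) hx
  have hpow : 1 + m * (1 / 8 : ℝ) ≤ (9 / 8) ^ m := by
    have := one_add_mul_le_pow (by norm_num : (-2 : ℝ) ≤ 1 / 8) m
    norm_num at this ⊢; linarith
  have hquarter : exp (-(x / 8)) ≤ 1 / 4 := by
    rw [one_div, ← exp_log (by norm_num : (0 : ℝ) < 4), ← exp_neg]
    exact exp_le_exp.2 (by linarith)
  have hexp : exp (-(x * (9 / 8) ^ m)) ≤ exp (-x) * (1 / 4) ^ m :=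
    calc exp (-(x * (9 / 8) ^ m)) ≤ exp (-x) * exp (-(x / 8)) ^ m := by
          rw [← exp_nat_mul, ← exp_add]
          exact exp_le_exp.2 (by nlinarith)
      _ ≤ exp (-x) * (1 / 4) ^ m := by gcongr
  have htwo : (2 : ℝ) ^ m + 1 ≤ 2 * 2 ^ m := by
    linarith [one_le_pow₀ (M₀ := ℝ) one_le_two (n := m)]
  calc (2 ^ m + 1) * (2 * exp (-(x * (9 / 8) ^ m)))
      ≤ (2 * 2 ^ m) * (2 * (exp (-x) * (1 / 4) ^ m)) := by gcongr
    _ = 4 * exp (-x) * (2 * (1 / 4)) ^ m := by rw [mul_pow]; ring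
    _ = 4 * exp (-x) * (1 / 2) ^ m := by norm_num

lemma exp_neg_mul_add_mul_exp_neg_mul_le {a b c R : ℝ} (hc : 0 ≤ c) (hR : 0 ≤ R) :
    exp (-(a * R)) + c * exp (-(b * R)) ≤ (1 + c) * (1 + R) * exp (-min b a * R) := by
  have ha : exp (-(a * R)) ≤ exp (-min b a * R) := exp_le_exp.2 (by nlinarith [min_le_right b a])
  have hb : exp (-(b * R)) ≤ exp (-min b a * R) := exp_le_exp.2 (by nlinarith [min_le_left b a])
  nlinarith [mul_le_mul_of_nonneg_left hb hc, mul_nonneg (mul_nonneg (by linarith : 0 ≤ 1 + c) hR)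
    (exp_pos (-min b a * R)).le]

lemma one_add_mul_iSup_abs_le {f : ℝ → ℝ} {Θ s R a : ℝ} (hΘ : 0 ≤ Θ) (hR : 0 ≤ R)
    (hsR : s ≤ R) (ha : 0 ≤ a) (hf : ∀ t ∈ Icc 0 R, |f t| ≤ a) :
    (1 + Θ * s) * ⨆ t ∈ Icc 0 s, |f t| ≤ (1 + Θ * R) * a := by
  have hsup0 : 0 ≤ ⨆ t ∈ Icc 0 s, |f t| :=
    Real.iSup_nonneg fun t => Real.iSup_nonneg fun _ => abs_nonneg _
  have hsup : ⨆ t ∈ Icc 0 s, |f t| ≤ a :=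
    Real.iSup_le (fun t => Real.iSup_le (fun ht => hf t ⟨ht.1, ht.2.trans hsR⟩) ha) ha
  calc (1 + Θ * s) * ⨆ t ∈ Icc 0 s, |f t|
      ≤ (1 + Θ * R) * ⨆ t ∈ Icc 0 s, |f t| := by gcongr
    _ ≤ (1 + Θ * R) * a := by gcongr

namespace IsStandardBrownianMotion

variable {Ω : Type*} [MeasurableSpace Ω] {μ : Measure Ω} {W : ℝ → Ω → ℝ} {r t : ℝ}

lemma map_sub (hW : IsStandardBrownianMotion μ W) (hr : 0 ≤ r) (hrt : r ≤ t) :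
    μ.map (fun ω => W t ω - W r ω) = gaussianReal 0 (t - r).toNNReal := by
  have h := hW.2.2.2 2 ![1, -1] ![t, r] (by simp [Fin.forall_fin_two, hr, hr.trans hrt])
  simp only [Fin.sum_univ_two, Matrix.cons_val_zero, Matrix.cons_val_one, min_self,
    min_eq_left hrt, min_eq_right hrt] at h
  convert h using 3
  · ring
  · ring

lemma hasSubgaussianMGF_sub (hW : IsStandardBrownianMotion μ W) (hr : 0 ≤ r) (hrt : r ≤ t) :
    HasSubgaussianMGF (fun ω => W t ω - W r ω) (t - r).toNNReal μ :=
  hasSubgaussianMGF_of_map_eq_gaussianReal ((hW.1 t).sub (hW.1 r)).aemeasurable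
    (hW.map_sub hr hrt)

lemma measure_abs_sub_ge_le [IsFiniteMeasure μ] (hW : IsStandardBrownianMotion μ W)
    (hr : 0 ≤ r) (hrt : r ≤ t) {δ a : ℝ} (hδ : t - r ≤ δ) (ha : 0 ≤ a) :
    μ {ω | a ≤ |W t ω - W r ω|} ≤ ENNReal.ofReal (2 * exp (-a ^ 2 / (2 * δ))) := by
  have h := ((hW.hasSubgaussianMGF_sub hr hrt).mono
    (Real.toNNReal_le_toNNReal hδ)).measure_abs_ge_le ha
  rwa [Real.coe_toNNReal _ ((sub_nonneg.2 hrt).trans hδ)] at h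

lemma measure_abs_dyadicIncrement_ge_le [IsFiniteMeasure μ] (hW : IsStandardBrownianMotion μ W)
    {R a : ℝ} (hR : 0 < R) (ha : 0 ≤ a) (m k : ℕ) :
    μ {ω | a / 4 * (3 / 4) ^ m ≤ |dyadicIncrement (W · ω) R m k|}
      ≤ ENNReal.ofReal (2 * exp (-(a ^ 2 / (32 * R) * (9 / 8) ^ m))) := by
  have hparent : ((2 * (k / 2) : ℕ) : ℝ) ≤ k := by exact_mod_cast Nat.mul_div_le k 2
  have hgap : (k : ℝ) ≤ (2 * (k / 2) : ℕ) + 1 := by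
    exact_mod_cast (by omega : k ≤ 2 * (k / 2) + 1)
  refine (hW.measure_abs_sub_ge_le (by positivity) (by gcongr) (δ := R / 2 ^ m) ?_
    (by positivity)).trans_eq ?_
  · rw [← sub_mul, ← sub_div, div_mul_eq_mul_div]
    exact div_le_div_of_nonneg_right (by nlinarith) (by positivity)
  · have h98 : (9 / 8 : ℝ) ^ m = ((3 / 4) ^ 2) ^ m * 2 ^ m := by rw [← mul_pow]; norm_num
    rw [h98, ← pow_mul, mul_comm 2 m, pow_mul]
    field_simp
    ring_nf

lemma measure_exists_lt_abs_le [IsFiniteMeasure μ] (hW : IsStandardBrownianMotion μ W)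
    {R a : ℝ} (hR : 0 < R) (ha : 0 ≤ a) (hlarge : 8 * log 4 ≤ a ^ 2 / (32 * R)) :
    μ {ω | ∃ t ∈ Icc 0 R, a < |W t ω|}
      ≤ ENNReal.ofReal (8 * exp (-(a ^ 2 / (32 * R)))) := by
  set x := a ^ 2 / (32 * R)
  set E : ℕ → ℕ → Set Ω := fun m k =>
    {ω | a / 4 * (3 / 4) ^ m ≤ |dyadicIncrement (W · ω) R m k|}
  have hsum : ∀ n, ∑ m ∈ Finset.range (n + 1), a / 4 * (3 / 4 : ℝ) ^ m ≤ a := fun n => by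
    rw [← Finset.mul_sum, Finset.range_eq_Ico]
    have := geom_sum_Ico_le_of_lt_one (x := (3 / 4 : ℝ)) (m := 0) (n := n + 1) (by norm_num)
      (by norm_num)
    nlinarith
  have hsub : {ω | ∃ t ∈ Icc 0 R, a < |W t ω|}
      ⊆ ⋃ m, ⋃ k ∈ Finset.range (2 ^ m + 1), E m k := by
    rintro ω ⟨t, ht, hat⟩
    by_contra hgood
    simp only [mem_iUnion, Finset.mem_range, not_exists, E, mem_ofPred_eq, not_le] at hgood
    exact hat.not_ge (abs_le_of_dyadicIncrement_le (hW.2.2.1 ω)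
      ((hW.2.1 ω).mono Icc_subset_Ici_self) hR hsum
      (fun m k hk => (hgood m k (Nat.lt_succ_of_le hk)).le) ht)
  have hlevel : ∀ m, ∑ k ∈ Finset.range (2 ^ m + 1), μ (E m k)
      ≤ ENNReal.ofReal (4 * exp (-x) * (1 / 2) ^ m) := fun m =>
    calc ∑ k ∈ Finset.range (2 ^ m + 1), μ (E m k)
        ≤ (2 ^ m + 1) • ENNReal.ofReal (2 * exp (-(x * (9 / 8) ^ m))) := by
          simpa only [Finset.card_range] using Finset.sum_le_card_nsmul
            (Finset.range (2 ^ m + 1)) _ _ fun k _ => hW.measure_abs_dyadicIncrement_ge_le hR ha m k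
      _ ≤ ENNReal.ofReal (4 * exp (-x) * (1 / 2) ^ m) := by
          rw [← ENNReal.ofReal_nsmul, nsmul_eq_mul]
          exact ENNReal.ofReal_le_ofReal
            (by exact_mod_cast two_pow_add_one_mul_exp_neg_le hlarge m)
  calc μ {ω | ∃ t ∈ Icc 0 R, a < |W t ω|}
      ≤ ∑' m, ∑ k ∈ Finset.range (2 ^ m + 1), μ (E m k) :=
        (measure_mono hsub).trans ((measure_iUnion_le _).trans
          (ENNReal.tsum_le_tsum fun m => measure_biUnion_finset_le _ _))
    _ ≤ ∑' m : ℕ, ENNReal.ofReal (4 * exp (-x) * (1 / 2) ^ m) := ENNReal.tsum_le_tsum hlevel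
    _ = ENNReal.ofReal (8 * exp (-x)) := by
        rw [← ENNReal.ofReal_tsum_of_nonneg (fun m => by positivity)
          (summable_geometric_two.mul_left _), tsum_mul_left, tsum_geometric_two]
        ring_nf

lemma measure_one_add_mul_iSup_abs_ge_le [IsFiniteMeasure μ] (hW : IsStandardBrownianMotion μ W)
    {S : Ω → ℝ} {lam Θ : ℝ} (hS_meas : Measurable S) (hS_exp : μ.map S = expMeasure lam)
    (hlam : 0 < lam) (hΘ : 0 ≤ Θ) {R a b : ℝ} (hR : 0 < R) (ha : 0 ≤ a)
    (hlarge : 8 * log 4 ≤ a ^ 2 / (32 * R)) (hb : (1 + Θ * R) * a < b) :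
    μ {ω | b ≤ (1 + Θ * S ω) * ⨆ t ∈ Icc 0 (S ω), |W t ω|}
      ≤ ENNReal.ofReal (exp (-(lam * R)) + 8 * exp (-(a ^ 2 / (32 * R)))) := by
  have hsub : {ω | b ≤ (1 + Θ * S ω) * ⨆ t ∈ Icc 0 (S ω), |W t ω|}
      ⊆ S ⁻¹' Ioi R ∪ {ω | ∃ t ∈ Icc 0 R, a < |W t ω|} := by
    intro ω hω
    by_contra hgood
    simp only [mem_union, mem_preimage, mem_Ioi, mem_ofPred_eq, not_or, not_lt, not_exists,
      not_and] at hgood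
    exact hb.not_ge (hω.trans (one_add_mul_iSup_abs_le hΘ hR.le hgood.1 ha hgood.2))
  calc μ {ω | b ≤ (1 + Θ * S ω) * ⨆ t ∈ Icc 0 (S ω), |W t ω|}
      ≤ μ (S ⁻¹' Ioi R) + μ {ω | ∃ t ∈ Icc 0 R, a < |W t ω|} :=
        (measure_mono hsub).trans (measure_union_le _ _)
    _ ≤ ENNReal.ofReal (exp (-(lam * R))) + ENNReal.ofReal (8 * exp (-(a ^ 2 / (32 * R)))) := by
        rw [← Measure.map_apply hS_meas measurableSet_Ioi, hS_exp, expMeasure_Ioi hlam hR.le]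
        gcongr
        exact hW.measure_exists_lt_abs_le hR ha hlarge
    _ = _ := (ENNReal.ofReal_add (by positivity) (by positivity)).symm

end IsStandardBrownianMotion

end

theorem brownian_sup_amplified_exponential_time_tail_bound_general
    {Ω : Type*} [MeasurableSpace Ω] (ℙ : Measure Ω) [IsProbabilityMeasure ℙ]
    (W : ℝ → Ω → ℝ) (hW : IsStandardBrownianMotion ℙ W)
    (σ : ℝ) (hσ : 0 < σ) (Θ : ℝ) (hΘ : 0 < Θ)
    (lam : ℝ) (hlam : 0 < lam)
    (S : Ω → ℝ) (hS_meas : Measurable S)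
    (hS_exp : Measure.map S ℙ = ProbabilityTheory.expMeasure lam) :
    ∃ c₀ > (0 : ℝ), ∃ c₁ > (0 : ℝ), ∃ C₀ > (0 : ℝ), ∀ C, C₀ ≤ C →
      ℙ {ω | C / (4 * σ) ≤ (1 + Θ * S ω) * ⨆ t ∈ Set.Icc (0 : ℝ) (S ω), |W t ω|}
        ≤ ENNReal.ofReal (c₀ * (1 + Real.sqrt C) * Real.exp (-c₁ * Real.sqrt C)) := by
  set K := 1 / (8 * σ * (1 + Θ)) with hK_def
  set γ := K ^ 2 / 32 with hγ_def
  have hγ : 0 < γ := by positivity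
  refine ⟨1 + 8, by norm_num, min γ lam, lt_min hγ hlam, 1 + (8 * Real.log 4 / γ) ^ 2,
    by positivity, fun C hC => ?_⟩
  set R := Real.sqrt C
  have hR1 : 1 ≤ R := Real.one_le_sqrt.2 (by nlinarith)
  have hRC : R * R = C := Real.mul_self_sqrt (by nlinarith)
  have hexponent : (K * R) ^ 2 / (32 * R) = γ * R := by rw [hγ_def]; field_simp
  have hlarge : 8 * Real.log 4 ≤ (K * R) ^ 2 / (32 * R) :=
    hexponent ▸ (div_le_iff₀' hγ).1 (Real.le_sqrt_of_sq_le (by linarith))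
  have hb : (1 + Θ * R) * (K * R) < C / (4 * σ) :=
    calc (1 + Θ * R) * (K * R) ≤ ((1 + Θ) * R) * (K * R) := by gcongr; nlinarith
      _ = R * R / (8 * σ) := by rw [hK_def]; field_simp
      _ < C / (4 * σ) := by rw [← hRC]; gcongr; linarith
  calc ℙ {ω | C / (4 * σ) ≤ (1 + Θ * S ω) * ⨆ t ∈ Set.Icc (0 : ℝ) (S ω), |W t ω|}
      ≤ ENNReal.ofReal (Real.exp (-(lam * R)) + 8 * Real.exp (-(γ * R))) := hexponent ▸
        hW.measure_one_add_mul_iSup_abs_ge_le hS_meas hS_exp hlam hΘ.le (by positivity)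
          (by positivity) hlarge hb
    _ ≤ ENNReal.ofReal ((1 + 8) * (1 + R) * Real.exp (-min γ lam * R)) :=
        ENNReal.ofReal_le_ofReal (exp_neg_mul_add_mul_exp_neg_mul_le (by norm_num) (by linarith))

/-- bound (A.14)–(A.15) of the paper: for a standard Brownian motion `W`
and an independent exponential time `S` with rate `λ > 0`, the quantity
`(1 + Θ S) · sup_{t∈[0,S]} |W(t)|` has a stretched-exponential tail. -/
theorem brownian_sup_amplified_exponential_time_tail_bound
    {Ω : Type*} [MeasurableSpace Ω] (ℙ : Measure Ω) [IsProbabilityMeasure ℙ]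
    (W : ℝ → Ω → ℝ) (hW : IsStandardBrownianMotion ℙ W)
    (σ : ℝ) (hσ : 0 < σ) (Θ : ℝ) (hΘ : 0 < Θ)
    (lam : ℝ) (hlam : 0 < lam)
    (S : Ω → ℝ) (hS_meas : Measurable S)
    (hS_exp : Measure.map S ℙ = ProbabilityTheory.expMeasure lam)
    (hS_indep : ProbabilityTheory.IndepFun S (fun ω => fun t : ℝ => W t ω) ℙ) :
    ∃ c₀ > (0 : ℝ), ∃ c₁ > (0 : ℝ), ∃ C₀ > (0 : ℝ), ∀ C, C₀ ≤ C →
      ℙ {ω | C / (4 * σ) ≤ (1 + Θ * S ω) * ⨆ t ∈ Set.Icc (0 : ℝ) (S ω), |W t ω|}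
        ≤ ENNReal.ofReal (c₀ * (1 + Real.sqrt C) * Real.exp (-c₁ * Real.sqrt C)) :=
  brownian_sup_amplified_exponential_time_tail_bound_general ℙ W hW σ hσ Θ hΘ lam hlam S hS_meas
    hS_exp
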